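/- arXiv:1608.06807 — 2 statements merged into one kernel-verified Lean document; each statement's English description precedes it below -/
import Mathlib

section
/- PU risk decomposition: π·∫ g dμ₊ + (1−π)·∫ h dμ₋ = π·∫ (g − h) dμ₊ + ∫ h dμ. In particular, the binary classification risk π·E_{μ₊}[ℓ(f(x),1)] + (1−π)·E_{μ₋}[ℓ(f(x),−1)] equals π·E_{μ₊}[ℓ(f(x),1) − ℓ(f(x),−1)] + E_μ[ℓ(f(x),−1)], which involves only the positive class-conditional distribution and the marginal distribution. -/
open MeasureTheory

/-- **PU risk decomposition.**  If `μ = π•μ₊ + (1-π)•μ₋` is the marginal distribution, then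
`π ∫ g dμ₊ + (1-π) ∫ h dμ₋ = π ∫ (g - h) dμ₊ + ∫ h dμ`.  Taking `g x = ℓ(f x, 1)` and
`h x = ℓ(f x, -1)` this rewrites the binary classification risk using only the positive
class-conditional distribution and the marginal distribution. -/
theorem pu_risk_decomposition
    {X : Type*} [MeasurableSpace X]
    (μp μm : Measure X) [IsProbabilityMeasure μp] [IsProbabilityMeasure μm]
    (π : ℝ) (hπ0 : 0 < π) (hπ1 : π < 1)
    (μ : Measure X)
    (hμ : μ = ENNReal.ofReal π • μp + ENNReal.ofReal (1 - π) • μm)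
    (g h : X → ℝ)
    (hg : Integrable g μp) (hhp : Integrable h μp) (hhm : Integrable h μm) :
    π * ∫ x, g x ∂μp + (1 - π) * ∫ x, h x ∂μm
      = π * ∫ x, (g x - h x) ∂μp + ∫ x, h x ∂μ := by
  have hμint : ∫ x, h x ∂μ = π * ∫ x, h x ∂μp + (1 - π) * ∫ x, h x ∂μm := by
    rw [hμ, integral_add_measure, integral_smul_measure, integral_smul_measure,
      ENNReal.toReal_ofReal hπ0.le, ENNReal.toReal_ofReal (by linarith : (0:ℝ) ≤ 1 - π),
      smul_eq_mul, smul_eq_mul]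
    · exact hhp.smul_measure ENNReal.ofReal_ne_top
    · exact hhm.smul_measure ENNReal.ofReal_ne_top
  rw [hμint, integral_sub hg hhp]
  ring
end

section
/- Lemma 1 (structure of the QP subproblem solution): any global minimizer (σ*, δ*) of G over the feasible set satisfies, for each coordinate u ∈ {1,2}, either σ*_u = c₂ − δ*_u/2 or σ*_u = δ*_u/2. -/
open Matrix

/-- Feasibility for the two-variable USMO QP subproblem. -/
def QPFeasible (a c₂ : ℝ) (σ δ : Fin 2 → ℝ) : Prop :=
  σ 0 + σ 1 = a ∧
  ∀ u : Fin 2, σ u + δ u / 2 ≤ c₂ ∧ 0 ≤ σ u - δ u / 2 ∧ 0 ≤ δ u ∧ δ u ≤ c₂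

/-- **Lemma 1 (structure of the QP subproblem solution).**
Any global minimizer `(σ*, δ*)` of
`G(σ,δ) = (1/2) σᵀKσ + eᵀσ - (1/2)(δ₁+δ₂)` over the feasible set of the QP subproblem
satisfies, for each coordinate `u`, either `σ*_u = c₂ - δ*_u/2` or `σ*_u = δ*_u/2`. -/
theorem qp_subproblem_solution_structure
    (K : Matrix (Fin 2) (Fin 2) ℝ) (hK : K.PosSemidef)
    (e : Fin 2 → ℝ) (a c₂ : ℝ) (hc₂ : 0 < c₂)
    (G : (Fin 2 → ℝ) → (Fin 2 → ℝ) → ℝ)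
    (hG : ∀ σ δ, G σ δ = (1 / 2) * (σ ⬝ᵥ (K *ᵥ σ)) + e ⬝ᵥ σ - (1 / 2) * (δ 0 + δ 1))
    (σs δs : Fin 2 → ℝ)
    (hfeas : QPFeasible a c₂ σs δs)
    (hmin : ∀ σ δ : Fin 2 → ℝ, QPFeasible a c₂ σ δ → G σs δs ≤ G σ δ) :
    ∀ u : Fin 2, σs u = c₂ - δs u / 2 ∨ σs u = δs u / 2 := by
  intro u
  by_contra hcon
  push_neg at hcon
  obtain ⟨h1, h2⟩ := hcon
  obtain ⟨hsum, hall⟩ := hfeas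
  obtain ⟨ha1, ha2, ha3, ha4⟩ := hall u
  have hlt1 : σs u + δs u / 2 < c₂ := lt_of_le_of_ne ha1 (by intro h; apply h1; linarith)
  have hlt2 : δs u / 2 < σs u := lt_of_le_of_ne (by linarith) (fun h => h2 h.symm)
  set ε := min (2 * (c₂ - δs u / 2 - σs u)) (min (2 * (σs u - δs u / 2)) (c₂ - δs u))
    with hε
  have hεpos : 0 < ε := by
    apply lt_min
    · linarith
    · apply lt_min <;> linarith
  have hε1 : ε ≤ 2 * (c₂ - δs u / 2 - σs u) := min_le_left _ _
  have hε2 : ε ≤ 2 * (σs u - δs u / 2) := le_trans (min_le_right _ _) (min_le_left _ _)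
  have hε3 : ε ≤ c₂ - δs u := le_trans (min_le_right _ _) (min_le_right _ _)
  set δ' := Function.update δs u (δs u + ε) with hδ'
  have hδu : δ' u = δs u + ε := Function.update_self _ _ _
  have hfeas' : QPFeasible a c₂ σs δ' := by
    refine ⟨hsum, fun v => ?_⟩
    by_cases hv : v = u
    · subst hv
      rw [hδu]
      refine ⟨by linarith, by linarith, by linarith, by linarith⟩
    · rw [hδ', Function.update_of_ne hv]
      exact hall v
  have hle := hmin σs δ' hfeas'
  have hGval : G σs δ' = G σs δs - ε / 2 := by
    rw [hG, hG]
    have hsum' : δ' 0 + δ' 1 = δs 0 + δs 1 + ε := by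
      fin_cases u <;>
        simp [hδ', Function.update_self, Function.update_of_ne] <;> ring
    rw [hsum']; ring
  linarith
end
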